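/- (Upper bound for the radius in the convex case with b₁ = 0.) Fix k ∈ [0,1). Let φ(z) = h(z) = 1/(1−z) on 𝔻 and let g be analytic on 𝔻 with g(0) = 0 and g'(z) = k z h'(z). Then φ is univalent with convex image, h ≺ φ, |g'(z)| ≤ k|h'(z)| on 𝔻, g'(0) = 0, dist(φ(0), ∂φ(𝔻)) = 1/2, the Taylor coefficients satisfy |a_n| = 1 for n ≥ 1 and |b_n| = k(n−1)/n for n ≥ 2, and for every r ∈ (0,1), ∑_{n=1}^∞ |a_n| r^n + ∑_{n=2}^∞ |b_n| r^n = (1+k)r/(1−r) + k·log(1−r); in particular this sum exceeds 1/2 whenever R < r < 1, where R ∈ (0,1) is the root of 2(1+k)R/(1−R) + 2k·log(1−R) = 1. -/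

import Mathlib

/-!
Since `h(z) = 1/(1-z) = ∑ zⁿ`, every `aₙ` equals `1`. The derivative `g' = kz/(1-z)²` has the
primitive `k (z/(1-z) + log(1-z))` vanishing at `0`, so `g` is that function and
`bₙ = k(n-1)/n`. Both coefficient sequences are nonnegative, so the Bohr sum is the value of the
same series at `r`, namely `(1+k)r/(1-r) + k log(1-r)`; this is strictly increasing on `[0,1)`
(its derivative is `(1+kr)/(1-r)²`) and equals `1/2` at `R`. Finally `z ↦ 1/(1-z)` maps the disk
onto the half-plane `Re w > 1/2`, whose boundary is at distance `1/2` from `φ(0) = 1`.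
-/

open Complex Metric Set

noncomputable section

/-- The open unit disk in the complex plane. -/
def unitDisk : Set ℂ := Metric.ball 0 1

/-- `h` is subordinate to `φ` on the unit disk: `h = φ ∘ ω` for some analytic
self-map `ω` of the unit disk fixing the origin. -/
def Subordinate (h φ : ℂ → ℂ) : Prop :=
  ∃ ω : ℂ → ℂ, AnalyticOnNhd ℂ ω unitDisk ∧ ω 0 = 0 ∧
    Set.MapsTo ω unitDisk unitDisk ∧ ∀ z ∈ unitDisk, h z = φ (ω z)

section PowerSeries

open FormalMultilinearSeries

variable {𝕜 : Type*} [RCLike 𝕜]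

theorem hasFPowerSeriesAt_ofScalars_of_hasSum {c : ℕ → 𝕜} {f : 𝕜 → 𝕜} {r : ℝ} (hr : 0 < r)
    (hf : ∀ z ∈ ball (0 : 𝕜) r, HasSum (fun n => c n * z ^ n) (f z)) :
    HasFPowerSeriesAt f (ofScalars 𝕜 c) 0 := by
  lift r to NNReal using hr.le
  have hhalf : (((r / 2 : NNReal) : ℝ) : 𝕜) ∈ ball (0 : 𝕜) r := by simpa using half_lt_self hr
  refine ⟨(r / 2 : NNReal), ⟨le_radius_of_summable _ ?_, by simpa using hr.ne', fun {y} hy => ?_⟩⟩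
  · simpa [ofScalars_norm] using (hf _ hhalf).summable.norm
  · rw [eball_coe] at hy
    simpa [ofScalars_apply_eq, mul_comm] using hf y (ball_subset_ball (by simp) hy)

theorem coeff_eq_of_hasSum {c d : ℕ → 𝕜} {f : 𝕜 → 𝕜} {r : ℝ} (hr : 0 < r)
    (hc : ∀ z ∈ ball (0 : 𝕜) r, HasSum (fun n => c n * z ^ n) (f z))
    (hd : ∀ z ∈ ball (0 : 𝕜) r, HasSum (fun n => d n * z ^ n) (f z)) : c = d :=
  ofScalars_series_injective 𝕜 𝕜 <|
    (hasFPowerSeriesAt_ofScalars_of_hasSum hr hc).eq_formalMultilinearSeries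
      (hasFPowerSeriesAt_ofScalars_of_hasSum hr hd)

end PowerSeries

theorem one_sub_ne_zero_of_norm_lt_one {R : Type*} [NormedRing R] [NormOneClass R] {x : R}
    (hx : ‖x‖ < 1) : 1 - x ≠ 0 :=
  sub_ne_zero.2 fun h => by simp [← h] at hx

theorem hasDerivAt_inv_one_sub {𝕜 : Type*} [NontriviallyNormedField 𝕜] {x : 𝕜}
    (hx : 1 - x ≠ 0) : HasDerivAt (fun y : 𝕜 => (1 - y)⁻¹) ((1 - x) ^ 2)⁻¹ x :=
  (((hasDerivAt_id x).const_sub 1).inv hx).congr_deriv (by simp)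

def divOneSubAddLog (z : ℂ) : ℂ := z / (1 - z) + Complex.log (1 - z)

theorem hasDerivAt_divOneSubAddLog {z : ℂ} (hz : ‖z‖ < 1) :
    HasDerivAt divOneSubAddLog (z * ((1 - z) ^ 2)⁻¹) z := by
  have hne := one_sub_ne_zero_of_norm_lt_one hz
  have hslit : 1 - z ∈ slitPlane := by
    simpa [sub_eq_add_neg] using mem_slitPlane_of_norm_lt_one (norm_neg z ▸ hz)
  have hsub : HasDerivAt (fun w : ℂ => 1 - w) (-1) z := (hasDerivAt_id z).const_sub 1
  refine (((hasDerivAt_id' z).div hsub hne).add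
    ((hasDerivAt_log hslit).comp z hsub)).congr_deriv ?_
  field_simp
  ring

theorem hasSum_divOneSubAddLog {z : ℂ} (hz : ‖z‖ < 1) :
    HasSum (fun n : ℕ => ((n : ℂ) - 1) / n * z ^ n) (divOneSubAddLog z) := by
  have hne := one_sub_ne_zero_of_norm_lt_one hz
  -- `(n - 1)/n = 1 - 1/n` except at `n = 0`, where the left side is `0`
  have hsum := ((hasSum_geometric_of_norm_lt_one hz).sub (hasSum_taylorSeries_neg_log hz)).sub
    (hasSum_ite_eq 0 (1 : ℂ))
  rw [show (1 - z)⁻¹ - -Complex.log (1 - z) - 1 = divOneSubAddLog z by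
    rw [divOneSubAddLog]; field_simp; ring] at hsum
  refine hsum.congr_fun fun n => ?_
  rcases eq_or_ne n 0 with rfl | hn
  · simp
  · have hn' : (n : ℂ) ≠ 0 := Nat.cast_ne_zero.2 hn
    simp only [hn, if_false]
    field_simp
    ring

theorem hasSum_real_divOneSubAddLog {r : ℝ} (hr : |r| < 1) :
    HasSum (fun n : ℕ => ((n : ℝ) - 1) / n * r ^ n) (r / (1 - r) + Real.log (1 - r)) := by
  have h1r : 0 ≤ 1 - r := by linarith [le_abs_self r]
  have hsum := hasSum_divOneSubAddLog (z := r) (by simpa using hr)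
  rw [divOneSubAddLog, ← ofReal_one, ← ofReal_sub, ← ofReal_log h1r, ← ofReal_div,
    ← ofReal_add] at hsum
  exact hasSum_ofReal.1 (hsum.congr_fun fun n => by push_cast; rfl)

theorem eqOn_const_mul_divOneSubAddLog {g : ℂ → ℂ} {c : ℂ}
    (hg : DifferentiableOn ℂ g unitDisk) (hg0 : g 0 = 0)
    (hg' : ∀ z ∈ unitDisk, deriv g z = c * z * ((1 - z) ^ 2)⁻¹) :
    EqOn g (fun z => c * divOneSubAddLog z) unitDisk := by
  have hL : ∀ z ∈ unitDisk, HasDerivAt (fun z => c * divOneSubAddLog z)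
      (c * (z * ((1 - z) ^ 2)⁻¹)) z := fun z hz =>
    (hasDerivAt_divOneSubAddLog (mem_ball_zero_iff.1 hz)).const_mul c
  refine isOpen_ball.eqOn_of_deriv_eq (convex_ball 0 1).isPreconnected hg
    (fun z hz => (hL z hz).differentiableAt.differentiableWithinAt)
    (fun z hz => by rw [hg' z hz, (hL z hz).deriv, mul_assoc]) (mem_ball_self one_pos) ?_
  simp [hg0, divOneSubAddLog]

theorem coeff_eq_of_deriv_eq {g : ℂ → ℂ} {b : ℕ → ℂ} {c : ℂ}
    (hg : DifferentiableOn ℂ g unitDisk) (hg0 : g 0 = 0)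
    (hg' : ∀ z ∈ unitDisk, deriv g z = c * z * ((1 - z) ^ 2)⁻¹)
    (hb : ∀ z ∈ unitDisk, HasSum (fun n => b n * z ^ n) (g z)) (n : ℕ) :
    b n = c * (((n : ℂ) - 1) / n) := by
  have hgL := eqOn_const_mul_divOneSubAddLog hg hg0 hg'
  refine congrFun (coeff_eq_of_hasSum (d := fun n : ℕ => c * (((n : ℂ) - 1) / n)) one_pos hb
    fun z hz => ?_) n
  rw [hgL hz]
  exact ((hasSum_divOneSubAddLog (mem_ball_zero_iff.1 hz)).mul_left c).congr_fun fun n => by ring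

theorem norm_ofReal_mul_sub_one_div {k : ℝ} (hk : 0 ≤ k) {n : ℕ} (hn : 1 ≤ n) :
    ‖(k : ℂ) * (((n : ℂ) - 1) / n)‖ = k * ((n : ℝ) - 1) / n := by
  have hn1 : (1 : ℝ) ≤ n := by exact_mod_cast hn
  rw [show (k : ℂ) * (((n : ℂ) - 1) / n) = ((k * ((n - 1) / n) : ℝ) : ℂ) by push_cast; rfl,
    norm_real, Real.norm_of_nonneg (by positivity), mul_div_assoc]

def bohrSum (a b : ℕ → ℂ) (r : ℝ) : ℝ :=
  (∑' n : ℕ, ‖a (n + 1)‖ * r ^ (n + 1)) + ∑' n : ℕ, ‖b (n + 2)‖ * r ^ (n + 2)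

theorem bohrSum_eq {a b : ℕ → ℂ} {k r : ℝ} (hr₀ : 0 ≤ r) (hr₁ : r < 1)
    (ha : ∀ n, 1 ≤ n → ‖a n‖ = 1) (hb : ∀ n : ℕ, 2 ≤ n → ‖b n‖ = k * ((n : ℝ) - 1) / n) :
    bohrSum a b r = (1 + k) * r / (1 - r) + k * Real.log (1 - r) := by
  have hA : HasSum (fun n => ‖a (n + 1)‖ * r ^ (n + 1)) (r / (1 - r)) :=
    ((hasSum_geometric_of_lt_one hr₀ hr₁).mul_left r).congr_fun fun n => by
      rw [ha _ n.succ_pos, pow_succ]; ring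
  have hshift : HasSum (fun n : ℕ => ((n + 2 : ℕ) - 1 : ℝ) / (n + 2 : ℕ) * r ^ (n + 2))
      (r / (1 - r) + Real.log (1 - r)) := by
    simpa [Finset.sum_range_succ] using
      (hasSum_nat_add_iff' 2).2 (hasSum_real_divOneSubAddLog (abs_lt.2 ⟨by linarith, hr₁⟩))
  have hB : HasSum (fun n => ‖b (n + 2)‖ * r ^ (n + 2)) (k * (r / (1 - r) + Real.log (1 - r))) :=
    (hshift.mul_left k).congr_fun fun n => by rw [hb _ (by omega)]; ring
  rw [bohrSum, hA.tsum_eq, hB.tsum_eq]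
  have : 1 - r ≠ 0 := by linarith
  field_simp
  ring

theorem hasDerivAt_bohrSum_closedForm (k : ℝ) {x : ℝ} (hx : x < 1) :
    HasDerivAt (fun r => (1 + k) * r / (1 - r) + k * Real.log (1 - r))
      ((1 + k * x) / (1 - x) ^ 2) x := by
  have hne : 1 - x ≠ 0 := by linarith
  have hsub : HasDerivAt (fun r : ℝ => 1 - r) (-1) x := (hasDerivAt_id' x).const_sub 1
  refine ((((hasDerivAt_id' x).const_mul (1 + k)).div hsub hne).add
    (((Real.hasDerivAt_log hne).comp x hsub).const_mul k)).congr_deriv ?_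
  field_simp
  ring

theorem strictMonoOn_bohrSum_closedForm {k : ℝ} (hk : 0 ≤ k) :
    StrictMonoOn (fun r => (1 + k) * r / (1 - r) + k * Real.log (1 - r)) (Ico 0 1) := by
  refine strictMonoOn_of_hasDerivWithinAt_pos (convex_Ico 0 1)
    (fun x hx => (hasDerivAt_bohrSum_closedForm k hx.2).continuousAt.continuousWithinAt)
    (fun x hx => (hasDerivAt_bohrSum_closedForm k (interior_subset hx).2).hasDerivWithinAt)
    fun x hx => ?_
  rw [interior_Ico] at hx
  have : 1 - x ≠ 0 := by linarith [hx.2]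
  have : 0 ≤ k * x := mul_nonneg hk hx.1.le
  positivity

theorem half_lt_bohrSum_closedForm {k R r : ℝ} (hk : 0 ≤ k) (hR : 0 ≤ R) (hRr : R < r)
    (hr : r < 1) (hRroot : 2 * (1 + k) * R / (1 - R) + 2 * k * Real.log (1 - R) = 1) :
    1 / 2 < (1 + k) * r / (1 - r) + k * Real.log (1 - r) := by
  have hRhalf : (1 + k) * R / (1 - R) + k * Real.log (1 - R) = 1 / 2 := by
    rw [mul_assoc, mul_div_assoc, mul_assoc] at hRroot
    linarith
  exact hRhalf ▸ strictMonoOn_bohrSum_closedForm hk ⟨hR, hRr.trans hr⟩ ⟨hR.trans hRr.le, hr⟩ hRr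

theorem norm_ofReal_mul_mul_le {k : ℝ} (hk : 0 ≤ k) {z : ℂ} (hz : ‖z‖ ≤ 1) (w : ℂ) :
    ‖(k : ℂ) * z * w‖ ≤ k * ‖w‖ := by
  rw [norm_mul, norm_mul, norm_real, Real.norm_of_nonneg hk]
  calc k * ‖z‖ * ‖w‖ ≤ k * 1 * ‖w‖ := by gcongr
    _ = k * ‖w‖ := by ring

theorem norm_sub_one_lt_norm_iff {w : ℂ} : ‖w - 1‖ < ‖w‖ ↔ 1 / 2 < w.re := by
  rw [← sq_lt_sq₀ (norm_nonneg _) (norm_nonneg _), Complex.sq_norm, Complex.sq_norm,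
    normSq_apply, normSq_apply]
  simp only [sub_re, one_re, sub_im, one_im, sub_zero]
  constructor <;> intro h <;> nlinarith

theorem image_inv_one_sub_unitDisk :
    (fun z : ℂ => (1 - z)⁻¹) '' unitDisk = {w | 1 / 2 < w.re} := by
  ext w
  simp only [mem_image, mem_ofPred_eq, ← norm_sub_one_lt_norm_iff]
  constructor
  · rintro ⟨z, hz, rfl⟩
    have hz1 := mem_ball_zero_iff.1 hz
    have hne := one_sub_ne_zero_of_norm_lt_one hz1
    rw [show (1 - z)⁻¹ - 1 = z * (1 - z)⁻¹ by field_simp; ring, norm_mul]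
    exact mul_lt_of_lt_one_left (norm_pos_iff.2 (inv_ne_zero hne)) hz1
  · intro hw
    have hw0 : w ≠ 0 := by rintro rfl; norm_num at hw
    refine ⟨1 - w⁻¹, mem_ball_zero_iff.2 ?_, by simp⟩
    rwa [show 1 - w⁻¹ = (w - 1) / w by field_simp, norm_div, div_lt_one (norm_pos_iff.2 hw0)]

theorem infDist_setOf_re_eq (w : ℂ) (c : ℝ) : infDist w {z | z.re = c} = |w.re - c| := by
  have hmem : (c + w.im * I : ℂ) ∈ {z : ℂ | z.re = c} := by simp
  refine le_antisymm ((infDist_le_dist_of_mem hmem).trans_eq ?_) ((le_infDist ⟨_, hmem⟩).2 ?_)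
  · rw [dist_eq, ← abs_re_eq_norm.2] <;> simp
  · intro z hz
    rw [dist_eq, ← hz.out, ← sub_re]
    exact abs_re_le_norm _

/-- Upper bound for the Bohr radius in the convex case with
`b₁ = 0`: for `φ = h = 1/(1-z)` and `g' = kz h'`, `g(0) = 0`, all the
hypotheses hold, the coefficients are `|aₙ| = 1` and `|bₙ| = k(n-1)/n`, the
Bohr sum equals `(1+k)r/(1-r) + k log(1-r)`, and it exceeds `1/2` for
`R < r < 1`, where `R` is the root of `2(1+k)R/(1-R) + 2k log(1-R) = 1`. -/
theorem bohr_radius_convex_b1_zero_sharp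
    (k : ℝ) (hk : k ∈ Set.Ico (0 : ℝ) 1)
    (φ h g : ℂ → ℂ) (a b : ℕ → ℂ)
    (hφ : ∀ z : ℂ, φ z = (1 - z)⁻¹) (hh : ∀ z : ℂ, h z = (1 - z)⁻¹)
    (hgan : AnalyticOnNhd ℂ g unitDisk) (hg0 : g 0 = 0)
    (hg' : ∀ z ∈ unitDisk, deriv g z = (k : ℂ) * z * deriv h z)
    (ha : ∀ z ∈ unitDisk, HasSum (fun n : ℕ => a n * z ^ n) (h z))
    (hb : ∀ z ∈ unitDisk, HasSum (fun n : ℕ => b n * z ^ n) (g z))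
    (R : ℝ) (hR : R ∈ Set.Ioo (0 : ℝ) 1)
    (hRroot : 2 * (1 + k) * R / (1 - R) + 2 * k * Real.log (1 - R) = 1) :
    Set.InjOn φ unitDisk ∧ Convex ℝ (φ '' unitDisk) ∧
    Subordinate h φ ∧
    (∀ z ∈ unitDisk, ‖deriv g z‖ ≤ k * ‖deriv h z‖) ∧
    deriv g 0 = 0 ∧
    Metric.infDist (φ 0) (frontier (φ '' unitDisk)) = 1 / 2 ∧
    (∀ n : ℕ, 1 ≤ n → ‖a n‖ = 1) ∧
    (∀ n : ℕ, 2 ≤ n → ‖b n‖ = k * ((n : ℝ) - 1) / n) ∧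
    (∀ r : ℝ, r ∈ Set.Ioo (0 : ℝ) 1 →
      (∑' n : ℕ, ‖a (n + 1)‖ * r ^ (n + 1)) +
        (∑' n : ℕ, ‖b (n + 2)‖ * r ^ (n + 2))
        = (1 + k) * r / (1 - r) + k * Real.log (1 - r)) ∧
    (∀ r : ℝ, R < r → r < 1 →
      1 / 2 < (∑' n : ℕ, ‖a (n + 1)‖ * r ^ (n + 1)) +
        (∑' n : ℕ, ‖b (n + 2)‖ * r ^ (n + 2))) := by
  obtain ⟨hk0, -⟩ := hk
  obtain rfl : φ = fun z => (1 - z)⁻¹ := funext hφ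
  obtain rfl : h = fun z => (1 - z)⁻¹ := funext hh
  have hderiv_h : ∀ z ∈ unitDisk, deriv (fun z : ℂ => (1 - z)⁻¹) z = ((1 - z) ^ 2)⁻¹ :=
    fun z hz =>
      (hasDerivAt_inv_one_sub (one_sub_ne_zero_of_norm_lt_one (mem_ball_zero_iff.1 hz))).deriv
  have ha1 : a = 1 := coeff_eq_of_hasSum one_pos ha fun z hz => by
    simpa using hasSum_geometric_of_norm_lt_one (mem_ball_zero_iff.1 hz)
  have hanorm : ∀ n : ℕ, 1 ≤ n → ‖a n‖ = 1 := fun n _ => by simp [ha1]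
  have hbnorm : ∀ n : ℕ, 2 ≤ n → ‖b n‖ = k * ((n : ℝ) - 1) / n := fun n hn => by
    rw [coeff_eq_of_deriv_eq hgan.differentiableOn hg0 (fun z hz => by rw [hg' z hz, hderiv_h z hz])
      hb n, norm_ofReal_mul_sub_one_div hk0 (by omega)]
  have hsum : ∀ r ∈ Ioo (0 : ℝ) 1, bohrSum a b r = (1 + k) * r / (1 - r) + k * Real.log (1 - r) :=
    fun r hr => bohrSum_eq hr.1.le hr.2 hanorm hbnorm
  refine ⟨fun z _ w _ hzw => sub_right_injective (inv_injective hzw), ?_,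
    ⟨id, analyticOnNhd_id, rfl, mapsTo_id _, fun z _ => rfl⟩,
    fun z hz => hg' z hz ▸ norm_ofReal_mul_mul_le hk0 (mem_ball_zero_iff.1 hz).le _,
    by simpa using hg' 0 (mem_ball_self one_pos), ?_, hanorm, hbnorm, hsum, fun r hRr hr1 => ?_⟩
  · rw [image_inv_one_sub_unitDisk]
    exact convex_halfSpace_re_gt _
  · rw [image_inv_one_sub_unitDisk, frontier_setOfPred_lt_re, infDist_setOf_re_eq]
    norm_num
  · exact (half_lt_bohrSum_closedForm hk0 hR.1.le hRr hr1 hRroot).trans_eq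
      (hsum r ⟨hR.1.trans hRr, hr1⟩).symm
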